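/- Let X₁,…,Xₙ be i.i.d. real random variables with E[X₁] = 0, E[X₁²] = 1, E|X₁|³ < ∞, and let Sₙ = (X₁+⋯+Xₙ)/√n. Then E[Sₙ·1{Sₙ ≥ C}] converges to φ(C) (the truncated first moment of a standard normal above C) uniformly in C at rate O(1/√n), assuming the non-uniform Berry-Esseen bound |P(Sₙ ≤ z) - Φ(z)| ≤ K/(√n(1+|z|³)). -/

import Mathlib

open Real MeasureTheory Filter ProbabilityTheory

/-- Standard normal density. -/
noncomputable def stdGaussPDF (x : ℝ) : ℝ :=
  (Real.sqrt (2 * Real.pi))⁻¹ * Real.exp (-x ^ 2 / 2)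

/-- Standard normal CDF. -/
noncomputable def stdGaussCDF (x : ℝ) : ℝ :=
  ∫ t in Set.Iic x, stdGaussPDF t

/-!
For any law `ρ` on `ℝ` with a first moment, the layer-cake formula applied to `(x - C)⁺` gives
`∫_{x ≥ C} x dρ = C·ρ[C, ∞) + ∫_{t > 0} ρ(C + t, ∞) dt`, and for the standard normal law the left
side is `φ(C)`. Subtracting the two formulas, the first term is controlled by the Berry–Esseen
bound at `C` (passed to the left limit, as `ρ[C, ∞) = 1 - ρ(-∞, C)`) and the second by the
integral of the bound. Both are `O(1/√n)` uniformly in `C`, because `|C| ≤ 1 + |C|³` and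
`∫ dz / (1 + |z|³) < ∞`.
-/

open Set Topology

lemma integrableOn_measureReal_lt {α : Type*} [MeasurableSpace α] {μ : Measure α}
    [IsFiniteMeasure μ] {f : α → ℝ} (hf : Integrable f μ) (hf₀ : 0 ≤ᵐ[μ] f) :
    IntegrableOn (fun t => μ.real {a | t < f a}) (Ioi 0) := by
  have hanti : Antitone fun t => μ.real {a | t < f a} := fun s t hst =>
    measureReal_mono fun a (ha : t < f a) => hst.trans_lt ha
  refine ⟨hanti.measurable.aestronglyMeasurable, ?_⟩
  rw [hasFiniteIntegral_iff_ofReal (ae_of_all _ fun t => measureReal_nonneg)]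
  simp only [fun t : ℝ => ofReal_measureReal (μ := μ) (s := {a | t < f a})]
  rw [← lintegral_eq_lintegral_meas_lt μ hf₀ hf.aemeasurable]
  exact hf.lintegral_lt_top

lemma measureReal_restrict_Ici_setOf_lt_sub (ρ : Measure ℝ) {C t : ℝ} (ht : 0 < t) :
    (ρ.restrict (Ici C)).real {x | t < x - C} = ρ.real (Ioi (C + t)) := by
  rw [measureReal_restrict_apply (measurableSet_lt measurable_const (measurable_sub_const C))]
  congr 1
  ext x
  simp only [mem_inter_iff, mem_ofPred_eq, mem_Ici, mem_Ioi]
  constructor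
  · rintro ⟨h, -⟩
    linarith
  · intro h
    constructor <;> linarith

lemma integrableOn_measureReal_Ioi_add {ρ : Measure ℝ} [IsFiniteMeasure ρ]
    (hρ : Integrable (fun x => x) ρ) (C : ℝ) :
    IntegrableOn (fun t => ρ.real (Ioi (C + t))) (Ioi 0) :=
  (integrableOn_measureReal_lt (μ := ρ.restrict (Ici C)) (hρ.sub (integrable_const C)).restrict
    (ae_restrict_of_forall_mem measurableSet_Ici fun _ hx => sub_nonneg.2 hx)).congr_fun
    (fun _ ht => measureReal_restrict_Ici_setOf_lt_sub ρ ht) measurableSet_Ioi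

lemma setIntegral_Ici_eq_mul_add_integral_measureReal_Ioi {ρ : Measure ℝ} [IsFiniteMeasure ρ]
    (hρ : Integrable (fun x => x) ρ) (C : ℝ) :
    ∫ x in Ici C, x ∂ρ = C * ρ.real (Ici C) + ∫ t in Ioi 0, ρ.real (Ioi (C + t)) := by
  have hint : Integrable (fun x => x - C) (ρ.restrict (Ici C)) :=
    (hρ.sub (integrable_const C)).restrict
  have hnonneg : 0 ≤ᵐ[ρ.restrict (Ici C)] fun x => x - C :=
    ae_restrict_of_forall_mem measurableSet_Ici fun x hx => sub_nonneg.2 hx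
  calc ∫ x in Ici C, x ∂ρ = ∫ x in Ici C, (x - C) ∂ρ + ∫ _ in Ici C, C ∂ρ := by
        rw [← integral_add hint (integrable_const C)]
        simp
    _ = C * ρ.real (Ici C) + ∫ t in Ioi 0, ρ.real (Ioi (C + t)) := by
        rw [hint.integral_eq_integral_meas_lt hnonneg, setIntegral_const, smul_eq_mul,
          setIntegral_congr_fun measurableSet_Ioi
            fun t ht => measureReal_restrict_Ici_setOf_lt_sub ρ ht]
        ring

lemma stdGaussPDF_eq_gaussianPDFReal : stdGaussPDF = gaussianPDFReal 0 1 := by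
  ext x
  simp [stdGaussPDF, gaussianPDFReal_def]

lemma stdGaussCDF_eq_measureReal_Iic (z : ℝ) :
    stdGaussCDF z = (gaussianReal 0 1).real (Iic z) := by
  rw [measureReal_def, gaussianReal_apply_eq_integral _ one_ne_zero, ENNReal.toReal_ofReal
    (setIntegral_nonneg measurableSet_Iic fun x _ => gaussianPDFReal_nonneg 0 1 x),
    stdGaussCDF, stdGaussPDF_eq_gaussianPDFReal]

lemma hasDerivAt_stdGaussPDF (x : ℝ) : HasDerivAt stdGaussPDF (-x * stdGaussPDF x) x := by
  have h := (((hasDerivAt_pow 2 x).neg.div_const 2).exp).const_mul (√(2 * π))⁻¹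
  refine h.congr_deriv ?_
  simp only [stdGaussPDF, Pi.neg_apply]
  push_cast
  ring

lemma tendsto_stdGaussPDF_atTop : Tendsto stdGaussPDF atTop (𝓝 0) := by
  have h : Tendsto (fun x : ℝ => -x ^ 2 / 2) atTop atBot :=
    (tendsto_neg_atTop_atBot.comp (tendsto_pow_atTop two_ne_zero)).atBot_div_const two_pos
  have h' := (tendsto_exp_atBot.comp h).const_mul (√(2 * π))⁻¹
  rw [mul_zero] at h'
  exact h'

lemma integrable_mul_stdGaussPDF : Integrable fun x => x * stdGaussPDF x := by
  have h := (integrable_rpow_mul_exp_neg_mul_sq (b := 1 / 2) (by norm_num) (s := 1)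
    (by norm_num)).const_mul (√(2 * π))⁻¹
  refine h.congr (ae_of_all _ fun x => ?_)
  simp only [rpow_one, stdGaussPDF]
  ring_nf

lemma setIntegral_Ici_id_gaussianReal (C : ℝ) :
    ∫ x in Ici C, x ∂gaussianReal 0 1 = stdGaussPDF C := by
  have hdens : ∫ x in Ici C, x ∂gaussianReal 0 1 = ∫ x in Ioi C, -(-x * stdGaussPDF x) := by
    rw [← integral_indicator measurableSet_Ici, integral_gaussianReal_eq_integral_smul one_ne_zero,
      ← integral_Ici_eq_integral_Ioi, ← integral_indicator measurableSet_Ici]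
    congr 1
    ext x
    by_cases hx : x ∈ Ici C <;> simp [hx, stdGaussPDF_eq_gaussianPDFReal, mul_comm]
  rw [hdens, integral_neg,
    integral_Ioi_of_hasDerivAt_of_tendsto' (fun x _ => hasDerivAt_stdGaussPDF x)
      (by simpa only [neg_mul] using integrable_mul_stdGaussPDF.fun_neg.integrableOn)
      tendsto_stdGaussPDF_atTop]
  ring

lemma tendsto_measureReal_Iic_nhdsLT (ρ : Measure ℝ) [IsProbabilityMeasure ρ] (C : ℝ) :
    Tendsto (fun z => ρ.real (Iic z)) (𝓝[<] C) (𝓝 (ρ.real (Iio C))) := by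
  have hcdf : (fun z => ρ.real (Iic z)) = cdf ρ := funext fun z => (cdf_eq_real ρ z).symm
  have hIio : ρ.real (Iio C) = Function.leftLim (cdf ρ) C := by
    have h := (cdf ρ).measure_Iio (tendsto_cdf_atBot ρ) C
    rw [measure_cdf, sub_zero] at h
    rw [measureReal_def, h, ENNReal.toReal_ofReal]
    exact (cdf_nonneg ρ (C - 1)).trans ((monotone_cdf ρ).le_leftLim (by linarith))
  rw [hcdf, hIio]
  exact (monotone_cdf ρ).tendsto_leftLim C

lemma abs_measureReal_Iio_sub_le {ρ ν : Measure ℝ} [IsProbabilityMeasure ρ]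
    [IsProbabilityMeasure ν] {B : ℝ → ℝ} (h : ∀ z, |ρ.real (Iic z) - ν.real (Iic z)| ≤ B z)
    {C : ℝ} (hBC : ContinuousWithinAt B (Iio C) C) :
    |ρ.real (Iio C) - ν.real (Iio C)| ≤ B C :=
  le_of_tendsto_of_tendsto
    ((tendsto_measureReal_Iic_nhdsLT ρ C).sub (tendsto_measureReal_Iic_nhdsLT ν C)).abs hBC
    (Eventually.of_forall h)

theorem abs_setIntegral_Ici_id_sub_le {ρ ν : Measure ℝ} [IsProbabilityMeasure ρ]
    [IsProbabilityMeasure ν] (hρ : Integrable (fun x => x) ρ) (hν : Integrable (fun x => x) ν)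
    {B : ℝ → ℝ} (hB : Integrable B) (h : ∀ z, |ρ.real (Iic z) - ν.real (Iic z)| ≤ B z)
    {C : ℝ} (hBC : ContinuousWithinAt B (Iio C) C) :
    |∫ x in Ici C, x ∂ρ - ∫ x in Ici C, x ∂ν| ≤ |C| * B C + ∫ z, B z := by
  have hIci : ρ.real (Ici C) - ν.real (Ici C) = -(ρ.real (Iio C) - ν.real (Iio C)) := by
    rw [← compl_Iio, probReal_compl_eq_one_sub measurableSet_Iio,
      probReal_compl_eq_one_sub measurableSet_Iio]
    ring
  have hIoi : ∀ z, |ρ.real (Ioi z) - ν.real (Ioi z)| ≤ B z := fun z => by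
    rw [← compl_Iic, probReal_compl_eq_one_sub measurableSet_Iic,
      probReal_compl_eq_one_sub measurableSet_Iic, ← abs_neg]
    convert h z using 2
    ring
  have htail : |∫ t in Ioi 0, (ρ.real (Ioi (C + t)) - ν.real (Ioi (C + t)))| ≤ ∫ z, B z :=
    calc _ ≤ ∫ t in Ioi 0, B (C + t) := (Real.norm_eq_abs _).symm.trans_le <|
          norm_integral_le_of_norm_le (hB.comp_add_left C).integrableOn
            (ae_of_all _ fun t => hIoi (C + t))
      _ ≤ ∫ t, B (C + t) := setIntegral_le_integral (hB.comp_add_left C)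
          (ae_of_all _ fun t => (abs_nonneg _).trans (h (C + t)))
      _ = ∫ z, B z := integral_add_left_eq_self B C
  rw [setIntegral_Ici_eq_mul_add_integral_measureReal_Ioi hρ C,
    setIntegral_Ici_eq_mul_add_integral_measureReal_Ioi hν C]
  calc _ = |C * -(ρ.real (Iio C) - ν.real (Iio C))
        + ∫ t in Ioi 0, (ρ.real (Ioi (C + t)) - ν.real (Ioi (C + t)))| := by
        rw [integral_sub (integrableOn_measureReal_Ioi_add hρ C)
          (integrableOn_measureReal_Ioi_add hν C), ← hIci]
        ring_nf
    _ ≤ |C| * B C + ∫ z, B z := by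
        refine (abs_add_le _ _).trans (add_le_add ?_ htail)
        rw [abs_mul, abs_neg]
        exact mul_le_mul_of_nonneg_left (abs_measureReal_Iio_sub_le h hBC) (abs_nonneg C)

lemma abs_setIntegral_ge_sub_stdGaussPDF_le {Ω : Type*} [MeasurableSpace Ω] {μ : Measure Ω}
    [IsProbabilityMeasure μ] {Y : Ω → ℝ} (hY : Integrable Y μ) {B : ℝ → ℝ} (hB : Integrable B)
    (h : ∀ z, |μ.real {ω | Y ω ≤ z} - stdGaussCDF z| ≤ B z)
    {C : ℝ} (hBC : ContinuousWithinAt B (Iio C) C) :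
    |∫ ω in {ω | C ≤ Y ω}, Y ω ∂μ - stdGaussPDF C| ≤ |C| * B C + ∫ z, B z := by
  have hYm := hY.aemeasurable
  have := Measure.isProbabilityMeasure_map (μ := μ) hYm
  have hlaw : ∀ z, (μ.map Y).real (Iic z) = μ.real {ω | Y ω ≤ z} := fun z => by
    rw [measureReal_def, Measure.map_apply_of_aemeasurable hYm measurableSet_Iic]
    rfl
  have key := abs_setIntegral_Ici_id_sub_le (ρ := μ.map Y) (ν := gaussianReal 0 1)
    ((integrable_map_measure aestronglyMeasurable_id hYm).2 hY)
    ((memLp_id_gaussianReal 1).integrable le_rfl) hB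
    (fun z => by rw [hlaw, ← stdGaussCDF_eq_measureReal_Iic]; exact h z) hBC
  rwa [setIntegral_map (f := fun x => x) measurableSet_Ici aestronglyMeasurable_id hYm,
    setIntegral_Ici_id_gaussianReal] at key

lemma abs_mul_inv_one_add_abs_pow_three_le_one (z : ℝ) : |z| * (1 + |z| ^ 3)⁻¹ ≤ 1 := by
  rw [← div_eq_mul_inv, div_le_one (by positivity)]
  nlinarith [mul_nonneg (abs_nonneg z) (sq_nonneg (|z| - 1)), sq_nonneg (|z| - 1 / 2)]

lemma continuous_inv_one_add_abs_pow_three : Continuous fun z : ℝ => (1 + |z| ^ 3)⁻¹ :=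
  (continuous_const.add (continuous_abs.pow 3)).inv₀ fun z =>
    (by positivity : (0 : ℝ) < 1 + |z| ^ 3).ne'

lemma integrable_inv_one_add_abs_pow_three : Integrable fun z : ℝ => (1 + |z| ^ 3)⁻¹ := by
  refine (integrable_inv_one_add_sq.const_mul 2).mono'
    continuous_inv_one_add_abs_pow_three.aestronglyMeasurable (ae_of_all _ fun z => ?_)
  have hpos : 0 < 1 + |z| ^ 3 := by positivity
  rw [norm_inv, Real.norm_of_nonneg hpos.le, ← div_eq_mul_inv, le_div_iff₀ (by positivity),
    inv_mul_eq_div, div_le_iff₀ hpos]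
  nlinarith [abs_nonneg z, sq_abs z, mul_nonneg (abs_nonneg z) (sq_nonneg (|z| - 1))]

theorem stmt_19_general {Ω : Type*} [MeasurableSpace Ω] (μ : Measure Ω)
    [IsProbabilityMeasure μ]
    (S : ℕ → Ω → ℝ)
    (hSint : ∀ n, Integrable (S n) μ)
    (F : ℕ → ℝ → ℝ) (hF : ∀ n z, F n z = (μ {ω | S n ω ≤ z}).toReal)
    (K : ℝ)
    (hBE : ∀ n : ℕ, 0 < n → ∀ z : ℝ,
      |F n z - stdGaussCDF z| ≤ K / (Real.sqrt n * (1 + |z| ^ 3))) :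
    ∃ K' : ℝ, 0 < K' ∧ ∀ n : ℕ, 0 < n → ∀ C : ℝ,
      |(∫ ω in {ω | C ≤ S n ω}, S n ω ∂μ) - stdGaussPDF C| ≤ K' / Real.sqrt n := by
  have hK : 0 ≤ K := by simpa using (abs_nonneg _).trans (hBE 1 one_pos 0)
  set I := ∫ z : ℝ, (1 + |z| ^ 3)⁻¹
  have hI : 0 ≤ I := integral_nonneg fun z => by positivity
  refine ⟨(1 + I) * K + 1, by positivity, fun n hn C => ?_⟩
  have hB : ∀ z, |μ.real {ω | S n ω ≤ z} - stdGaussCDF z| ≤ K / √n * (1 + |z| ^ 3)⁻¹ :=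
    fun z => by
      rw [measureReal_def, ← hF]
      exact (hBE n hn z).trans_eq (by rw [← div_div, div_eq_mul_inv])
  have key := abs_setIntegral_ge_sub_stdGaussPDF_le (C := C) (hSint n)
    (integrable_inv_one_add_abs_pow_three.const_mul _) hB
    (continuous_inv_one_add_abs_pow_three.const_mul _ |>.continuousWithinAt)
  rw [integral_const_mul] at key
  calc _ ≤ |C| * (K / √n * (1 + |C| ^ 3)⁻¹) + K / √n * I := key
    _ = K / √n * (|C| * (1 + |C| ^ 3)⁻¹) + K / √n * I := by ring
    _ ≤ K / √n * 1 + K / √n * I := by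
        gcongr
        exact abs_mul_inv_one_add_abs_pow_three_le_one C
    _ ≤ ((1 + I) * K + 1) / √n := by
        rw [← mul_add, div_mul_eq_mul_div, add_comm 1 I]
        gcongr
        linarith

/-- Uniform convergence of partial first moments: for `Sₙ` the normalized sum
of i.i.d. standardized variables with finite third moment, assuming the
non-uniform Berry-Esseen bound, `E[Sₙ·1{Sₙ ≥ C}]` converges to `φ(C)`
uniformly in `C` at rate `O(1/√n)`. -/
theorem stmt_19 {Ω : Type*} [MeasurableSpace Ω] (μ : Measure Ω)
    [IsProbabilityMeasure μ]
    (X : ℕ → Ω → ℝ) (hmeas : ∀ j, Measurable (X j))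
    (hindep : iIndepFun X μ)
    (hident : ∀ j, Measure.map (X j) μ = Measure.map (X 0) μ)
    (hmean : ∫ ω, X 0 ω ∂μ = 0) (hvar : ∫ ω, (X 0 ω) ^ 2 ∂μ = 1)
    (hthird : Integrable (fun ω => |X 0 ω| ^ 3) μ)
    (S : ℕ → Ω → ℝ)
    (hS : ∀ n ω, S n ω = (∑ j ∈ Finset.range n, X j ω) / Real.sqrt n)
    (hSint : ∀ n, Integrable (S n) μ)
    (F : ℕ → ℝ → ℝ) (hF : ∀ n z, F n z = (μ {ω | S n ω ≤ z}).toReal)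
    (K : ℝ)
    (hBE : ∀ n : ℕ, 0 < n → ∀ z : ℝ,
      |F n z - stdGaussCDF z| ≤ K / (Real.sqrt n * (1 + |z| ^ 3))) :
    ∃ K' : ℝ, 0 < K' ∧ ∀ n : ℕ, 0 < n → ∀ C : ℝ,
      |(∫ ω in {ω | C ≤ S n ω}, S n ω ∂μ) - stdGaussPDF C| ≤ K' / Real.sqrt n :=
  stmt_19_general μ S hSint F hF K hBE
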